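/- arXiv:2404.02306 — 2 statements merged into one kernel-verified Lean document; each statement's English description precedes it below -/
import Mathlib

section
/- Let u, v : [0,∞) → ℝ be nonnegative continuous functions, let h : [0,∞) × [0,∞) → ℝ be a nonnegative continuous function, and let c₁, c₂ ≥ 0 be constants. If for all t ≥ 0 one has u(t) ≤ c₁ + c₂ ∫₀ᵗ [ v(s) u(s) + ∫₀ˢ h(s,r) u(r) dr ] ds, then for all t ≥ 0 one has u(t) ≤ c₁ · exp( c₂ ∫₀ᵗ ( v(s) + ∫₀ˢ h(s,r) dr ) ds ). (Lemma 5.1, a Gronwall-type inequality with an iterated-integral memory term.) -/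
open MeasureTheory intervalIntegral Set

/-!
With `ψ s = v s * u s + ∫₀ˢ h s r * u r dr` and `φ s = v s + ∫₀ˢ h s r dr`, the right-hand side
`f t = c₁ + c₂ ∫₀ᵗ ψ` of the hypothesis is nondecreasing because `ψ ≥ 0`. Hence `u ≤ f` on `[0, s]`
is dominated by `f s`, which gives `ψ s ≤ φ s * f s`, i.e. `f' ≤ c₂ φ f`. The differential
Gronwall inequality (`f e^{-∫ c₂ φ}` is nonincreasing) then bounds `f`, and so `u`.
-/

theorem continuousOn_Ici_parametric_intervalIntegral {F : ℝ → ℝ → ℝ} {a : ℝ}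
    (hF : ContinuousOn (fun p : ℝ × ℝ => F p.1 p.2) (Ici a ×ˢ Ici a)) :
    ContinuousOn (fun s => ∫ r in a..s, F s r) (Ici a) := by
  -- Precompose with the retraction `x ↦ max x a` onto `Ici a` to get a globally continuous kernel.
  have hG : Continuous fun p : ℝ × ℝ => F (max p.1 a) (max p.2 a) :=
    hF.comp_continuous (f := fun p : ℝ × ℝ => (max p.1 a, max p.2 a)) (by fun_prop)
      fun p => ⟨le_max_right p.1 a, le_max_right p.2 a⟩
  refine (continuous_parametric_intervalIntegral_of_continuous
    (f := fun s r => F (max s a) (max r a)) (μ := volume) (a₀ := a) hG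
    continuous_id).continuousOn.congr fun s hs => ?_
  refine integral_congr fun r hr => ?_
  rw [uIcc_of_le hs] at hr
  simp only [max_eq_left (mem_Ici.1 hs), max_eq_left hr.1]

section Primitive

variable {g : ℝ → ℝ} {a b : ℝ}

theorem continuousOn_primitive_of_continuousOn_Icc (hab : a ≤ b)
    (hg : ContinuousOn g (Icc a b)) :
    ContinuousOn (fun x => ∫ y in a..x, g y) (Icc a b) := by
  rw [← uIcc_of_le hab] at hg ⊢
  exact continuousOn_primitive_interval (hg.integrableOn_compact isCompact_uIcc)

theorem hasDerivAt_primitive_of_continuousOn_Icc {t : ℝ} (hg : ContinuousOn g (Icc a b))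
    (ht : t ∈ Ioo a b) : HasDerivAt (fun x => ∫ y in a..x, g y) (g t) t :=
  integral_hasDerivAt_right
    ((hg.mono (Icc_subset_Icc_right ht.2.le)).intervalIntegrable_of_Icc ht.1.le)
    ((hg.mono Ioo_subset_Icc_self).stronglyMeasurableAtFilter isOpen_Ioo t ht)
    (hg.continuousAt (Icc_mem_nhds ht.1 ht.2))

theorem monotoneOn_primitive_of_nonneg (hg : ContinuousOn g (Ici a))
    (hg_nonneg : ∀ x ∈ Ici a, 0 ≤ g x) : MonotoneOn (fun x => ∫ y in a..x, g y) (Ici a) :=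
  fun _ hx _ _ hxy => integral_mono_interval le_rfl hx hxy
    (ae_restrict_of_forall_mem measurableSet_Ioc fun z hz => hg_nonneg z hz.1.le)
    ((hg.mono Icc_subset_Ici_self).intervalIntegrable_of_Icc (le_trans hx hxy))

end Primitive

theorem le_mul_exp_integral_of_hasDerivAt_le_mul {f f' k : ℝ → ℝ} {a b : ℝ} (hab : a ≤ b)
    (hf : ContinuousOn f (Icc a b)) (hk : ContinuousOn k (Icc a b))
    (hf' : ∀ t ∈ Ioo a b, HasDerivAt f (f' t) t) (hle : ∀ t ∈ Ioo a b, f' t ≤ k t * f t) :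
    f b ≤ f a * Real.exp (∫ t in a..b, k t) := by
  set K : ℝ → ℝ := fun x => ∫ t in a..x, k t
  have hF' : ∀ t ∈ Ioo a b, HasDerivAt (fun x => f x * Real.exp (-K x))
      (f' t * Real.exp (-K t) + f t * (Real.exp (-K t) * -k t)) t := fun t ht =>
    (hf' t ht).mul (hasDerivAt_primitive_of_continuousOn_Icc hk ht).neg.exp
  have hanti : AntitoneOn (fun x => f x * Real.exp (-K x)) (Icc a b) := by
    refine antitoneOn_of_deriv_nonpos (convex_Icc a b)
      (hf.mul (continuousOn_primitive_of_continuousOn_Icc hab hk).neg.rexp) ?_ ?_ <;>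
      rw [interior_Icc]
    · exact fun t ht => (hF' t ht).differentiableAt.differentiableWithinAt
    · intro t ht
      rw [(hF' t ht).deriv]
      nlinarith [hle t ht, Real.exp_pos (-K t)]
  have hba := hanti (left_mem_Icc.2 hab) (right_mem_Icc.2 hab) hab
  simp only [K, integral_same, neg_zero, Real.exp_zero, mul_one, Real.exp_neg] at hba
  rwa [← div_eq_mul_inv, div_le_iff₀ (Real.exp_pos _)] at hba

theorem add_integral_le_mul_exp_integral {ψ k : ℝ → ℝ} {a b c : ℝ} (hab : a ≤ b)
    (hψ : ContinuousOn ψ (Icc a b)) (hk : ContinuousOn k (Icc a b))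
    (hle : ∀ s ∈ Ioo a b, ψ s ≤ k s * (c + ∫ r in a..s, ψ r)) :
    c + ∫ s in a..b, ψ s ≤ c * Real.exp (∫ s in a..b, k s) := by
  simpa using le_mul_exp_integral_of_hasDerivAt_le_mul (f := fun t => c + ∫ s in a..t, ψ s) hab
    (continuousOn_const.add (continuousOn_primitive_of_continuousOn_Icc hab hψ)) hk
    (fun t ht => (hasDerivAt_primitive_of_continuousOn_Icc hψ ht).const_add c) hle

theorem mul_add_integral_mul_le {u g : ℝ → ℝ} {a s c M : ℝ} (has : a ≤ s)
    (hu : ContinuousOn u (Icc a s)) (hg : ContinuousOn g (Icc a s)) (hc : 0 ≤ c)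
    (hg_nonneg : ∀ r ∈ Icc a s, 0 ≤ g r) (huM : ∀ r ∈ Icc a s, u r ≤ M) :
    c * u s + ∫ r in a..s, g r * u r ≤ (c + ∫ r in a..s, g r) * M := by
  have hint : ∫ r in a..s, g r * u r ≤ ∫ r in a..s, g r * M :=
    integral_mono_on has ((hg.mul hu).intervalIntegrable_of_Icc has)
      ((hg.mul continuousOn_const).intervalIntegrable_of_Icc has)
      fun r hr => mul_le_mul_of_nonneg_left (huM r hr) (hg_nonneg r hr)
  rw [intervalIntegral.integral_mul_const] at hint
  linarith [mul_le_mul_of_nonneg_left (huM s (right_mem_Icc.2 has)) hc]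

theorem gronwall_with_memory_general (u v : ℝ → ℝ) (h : ℝ → ℝ → ℝ) (c₁ c₂ : ℝ)
    (hu_cont : ContinuousOn u (Set.Ici 0)) (hv_cont : ContinuousOn v (Set.Ici 0))
    (hh_cont : ContinuousOn (fun p : ℝ × ℝ => h p.1 p.2) (Set.Ici 0 ×ˢ Set.Ici 0))
    (hu_nonneg : ∀ t, 0 ≤ t → 0 ≤ u t) (hv_nonneg : ∀ t, 0 ≤ t → 0 ≤ v t)
    (hh_nonneg : ∀ s r, 0 ≤ s → 0 ≤ r → 0 ≤ h s r)
    (hc₂ : 0 ≤ c₂)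
    (hbound : ∀ t, 0 ≤ t →
      u t ≤ c₁ + c₂ * ∫ s in (0 : ℝ)..t, (v s * u s + ∫ r in (0 : ℝ)..s, h s r * u r)) :
    ∀ t, 0 ≤ t →
      u t ≤ c₁ * Real.exp (c₂ * ∫ s in (0 : ℝ)..t, (v s + ∫ r in (0 : ℝ)..s, h s r)) := by
  intro t ht
  set ψ : ℝ → ℝ := fun s => v s * u s + ∫ r in (0 : ℝ)..s, h s r * u r
  set φ : ℝ → ℝ := fun s => v s + ∫ r in (0 : ℝ)..s, h s r
  have hψ : ContinuousOn ψ (Ici 0) := (hv_cont.mul hu_cont).add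
    (continuousOn_Ici_parametric_intervalIntegral
      (hh_cont.mul (hu_cont.comp continuousOn_snd fun _ hp => hp.2)))
  have hφ : ContinuousOn φ (Ici 0) :=
    hv_cont.add (continuousOn_Ici_parametric_intervalIntegral hh_cont)
  have hψ_nonneg : ∀ s ∈ Ici (0 : ℝ), 0 ≤ ψ s := fun s hs =>
    add_nonneg (mul_nonneg (hv_nonneg s hs) (hu_nonneg s hs)) (integral_nonneg hs
      fun r hr => mul_nonneg (hh_nonneg s r hs hr.1) (hu_nonneg r hr.1))
  have hu_le : ∀ s ∈ Ici (0 : ℝ), ∀ r ∈ Icc 0 s, u r ≤ c₁ + c₂ * ∫ x in (0 : ℝ)..s, ψ x :=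
    fun s hs r hr => (hbound r hr.1).trans <| by
      gcongr
      exact monotoneOn_primitive_of_nonneg hψ hψ_nonneg hr.1 hs hr.2
  have hkey : ∀ s ∈ Ioo (0 : ℝ) t,
      c₂ * ψ s ≤ c₂ * φ s * (c₁ + ∫ r in (0 : ℝ)..s, c₂ * ψ r) := by
    intro s hs
    have hh_slice : ContinuousOn (h s) (Icc 0 s) :=
      hh_cont.comp (continuousOn_const.prodMk continuousOn_id) fun r hr => ⟨hs.1.le, hr.1⟩
    rw [intervalIntegral.integral_const_mul, mul_assoc]
    exact mul_le_mul_of_nonneg_left (mul_add_integral_mul_le hs.1.le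
      (hu_cont.mono Icc_subset_Ici_self) hh_slice (hv_nonneg s hs.1.le)
      (fun r hr => hh_nonneg s r hs.1.le hr.1) (hu_le s hs.1.le)) hc₂
  have hf := add_integral_le_mul_exp_integral (ψ := fun s => c₂ * ψ s) (k := fun s => c₂ * φ s)
    ht ((continuousOn_const.mul hψ).mono Icc_subset_Ici_self)
    ((continuousOn_const.mul hφ).mono Icc_subset_Ici_self) hkey
  simp only [intervalIntegral.integral_const_mul] at hf
  exact (hbound t ht).trans hf

/-- Lemma 5.1: a Gronwall-type inequality with an iterated-integral memory term. -/
theorem gronwall_with_memory (u v : ℝ → ℝ) (h : ℝ → ℝ → ℝ) (c₁ c₂ : ℝ)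
    (hu_cont : ContinuousOn u (Set.Ici 0)) (hv_cont : ContinuousOn v (Set.Ici 0))
    (hh_cont : ContinuousOn (fun p : ℝ × ℝ => h p.1 p.2) (Set.Ici 0 ×ˢ Set.Ici 0))
    (hu_nonneg : ∀ t, 0 ≤ t → 0 ≤ u t) (hv_nonneg : ∀ t, 0 ≤ t → 0 ≤ v t)
    (hh_nonneg : ∀ s r, 0 ≤ s → 0 ≤ r → 0 ≤ h s r)
    (hc₁ : 0 ≤ c₁) (hc₂ : 0 ≤ c₂)
    (hbound : ∀ t, 0 ≤ t →
      u t ≤ c₁ + c₂ * ∫ s in (0 : ℝ)..t, (v s * u s + ∫ r in (0 : ℝ)..s, h s r * u r)) :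
    ∀ t, 0 ≤ t →
      u t ≤ c₁ * Real.exp (c₂ * ∫ s in (0 : ℝ)..t, (v s + ∫ r in (0 : ℝ)..s, h s r)) :=
  gronwall_with_memory_general u v h c₁ c₂ hu_cont hv_cont hh_cont hu_nonneg hv_nonneg hh_nonneg hc₂
    hbound
end

section
/- Let 1 ≤ p < ∞. There exists a constant C > 0, depending only on p and d but independent of ε and of u, with the following property: for every ε ∈ (0,1] and every continuously differentiable function u : ℝ^d → ℝ that is bounded together with its gradient on the thin domain Ω_ε, defining the thin-direction average M_ε u(x̄) = (1/(2ε)) ∫_{−ε}^{ε} u(x̄, ζ) dζ for x̄ ∈ Ω, one has ∫_{Ω_ε} |u(x̄, x_d) − M_ε u(x̄)|^p dx ≤ C^p ε^p ∫_{Ω_ε} |∂u/∂x_d(x)|^p dx. (The Poincaré–Wirtinger inequality (*1) in a thin domain, with constant of order ε.) -/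
/-! On each vertical segment `{x̄} × (-ε, ε)` the fundamental theorem of calculus bounds the
oscillation `|u - M_ε u|` by `∫_{-ε}^{ε} |∂u/∂x_d|`, and Jensen's inequality bounds the `p`-th power
of that by `(2ε)^(p-1) ∫_{-ε}^{ε} |∂u/∂x_d|^p`. Integrating over the segment gives the
one-dimensional inequality with constant `(2ε)^p`, and Fubini over `Ω × (-ε, ε)`, which is `Ω_ε`
up to a measure-preserving change of coordinates, gives the theorem with `C = 2`. -/

open MeasureTheory

/-- The thin domain `Ω_ε = Ω × (−ε, ε) ⊆ ℝ^{n+1}`, for `Ω ⊆ ℝ^n`. -/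
def thinDomain (n : ℕ) (Ω : Set (EuclideanSpace ℝ (Fin n))) (ε : ℝ) :
    Set (EuclideanSpace ℝ (Fin (n + 1))) :=
  {x | (WithLp.toLp 2 (fun i : Fin n => x i.castSucc) : EuclideanSpace ℝ (Fin n)) ∈ Ω ∧
    |x (Fin.last n)| < ε}

/-- The thin-direction average `M_ε u(xb) = (1/(2ε)) ∫_{−ε}^{ε} u(xb, ζ) dζ`. -/
noncomputable def thinAverage (n : ℕ) (ε : ℝ) (u : EuclideanSpace ℝ (Fin (n + 1)) → ℝ)
    (xb : EuclideanSpace ℝ (Fin n)) : ℝ :=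
  (1 / (2 * ε)) * ∫ ζ in (-ε)..ε, u (WithLp.toLp 2 (Fin.snoc xb.ofLp ζ : Fin (n + 1) → ℝ) : EuclideanSpace ℝ (Fin (n + 1)))

open Set

lemma rpow_setIntegral_abs_le {α : Type*} [MeasurableSpace α] {μ : Measure α} {s : Set α}
    {p : ℝ} {f : α → ℝ} (hp : 1 ≤ p) (hs0 : μ s ≠ 0) (hs : μ s ≠ ⊤)
    (hf : IntegrableOn f s μ) (hfp : IntegrableOn (fun x ↦ |f x| ^ p) s μ) :
    (∫ x in s, |f x| ∂μ) ^ p ≤ μ.real s ^ (p - 1) * ∫ x in s, |f x| ^ p ∂μ := by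
  have hm : 0 < μ.real s := ENNReal.toReal_pos hs0 hs
  have jensen : (⨍ x in s, |f x| ∂μ) ^ p ≤ ⨍ x in s, |f x| ^ p ∂μ :=
    (convexOn_rpow hp).map_set_average_le
      (fun x _ ↦ (Real.continuousAt_rpow_const x p (Or.inr (by linarith))).continuousWithinAt)
      isClosed_Ici hs0 hs (.of_forall fun x ↦ abs_nonneg (f x)) hf.abs hfp
  rw [setAverage_eq, setAverage_eq, smul_eq_mul, smul_eq_mul,
    Real.mul_rpow (inv_nonneg.2 hm.le) (integral_nonneg fun x ↦ abs_nonneg (f x)),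
    Real.inv_rpow hm.le, inv_mul_le_iff₀ (by positivity)] at jensen
  rwa [Real.rpow_sub_one hm.ne', div_eq_mul_inv, mul_assoc]

section IntervalPoincare

variable {a b p : ℝ} {w D : ℝ → ℝ}

lemma abs_sub_le_intervalIntegral_abs_deriv (hd : ∀ x, HasDerivAt w (D x) x) (hD : Continuous D)
    {s t : ℝ} (hs : s ∈ Icc a b) (ht : t ∈ Icc a b) :
    |w t - w s| ≤ ∫ x in a..b, |D x| := by
  rw [← intervalIntegral.integral_eq_sub_of_hasDerivAt (fun x _ ↦ hd x) (hD.intervalIntegrable s t),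
    intervalIntegral.integral_of_le (hs.1.trans hs.2)]
  calc |∫ x in s..t, D x| ≤ ∫ x in uIoc s t, |D x| :=
        intervalIntegral.norm_integral_le_integral_norm_uIoc (f := D)
    _ ≤ ∫ x in Ioc a b, |D x| :=
        setIntegral_mono_set (hD.abs.integrableOn_Icc.mono_set Ioc_subset_Icc_self)
          (.of_forall fun x ↦ abs_nonneg (D x))
          (Ioc_subset_Ioc (le_min hs.1 ht.1) (max_le hs.2 ht.2)).eventuallyLE

lemma abs_sub_intervalAverage_le (hab : a < b) (hd : ∀ x, HasDerivAt w (D x) x)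
    (hD : Continuous D) {t : ℝ} (ht : t ∈ Icc a b) :
    |w t - ⨍ x in a..b, w x| ≤ ∫ x in a..b, |D x| := by
  have hw : Continuous w := continuous_iff_continuousAt.2 fun x ↦ (hd x).continuousAt
  have hba : 0 < b - a := sub_pos.2 hab
  have key : w t - ⨍ x in a..b, w x = (b - a)⁻¹ * ∫ x in a..b, (w t - w x) := by
    rw [interval_average_eq, intervalIntegral.integral_sub intervalIntegrable_const
      (hw.intervalIntegrable a b), intervalIntegral.integral_const, smul_eq_mul, smul_eq_mul]
    field_simp
  rw [key, abs_mul, abs_of_pos (inv_pos.2 hba), inv_mul_le_iff₀ hba]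
  have bound := intervalIntegral.norm_integral_le_of_norm_le_const (a := a) (b := b)
    (f := fun x ↦ w t - w x) fun x hx ↦ abs_sub_le_intervalIntegral_abs_deriv hd hD
      (Ioc_subset_Icc_self (uIoc_of_le hab.le ▸ hx)) ht
  rwa [abs_of_pos hba, mul_comm] at bound

theorem intervalIntegral_abs_sub_intervalAverage_rpow_le (hab : a < b) (hp : 1 ≤ p)
    (hd : ∀ x, HasDerivAt w (D x) x) (hD : Continuous D) :
    ∫ t in a..b, |w t - ⨍ x in a..b, w x| ^ p ≤ (b - a) ^ p * ∫ t in a..b, |D t| ^ p := by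
  have hw : Continuous w := continuous_iff_continuousAt.2 fun x ↦ (hd x).continuousAt
  have hba : 0 < b - a := sub_pos.2 hab
  have hp0 : 0 ≤ p := by linarith
  set K := ∫ x in a..b, |D x|
  have hK : K ^ p ≤ (b - a) ^ (p - 1) * ∫ t in a..b, |D t| ^ p := by
    have h := rpow_setIntegral_abs_le (μ := volume) (s := Ioc a b) hp (by simp [hab]) (by simp)
      (hD.integrableOn_Icc.mono_set Ioc_subset_Icc_self)
      ((hD.abs.rpow_const fun _ ↦ .inr hp0).integrableOn_Icc.mono_set Ioc_subset_Icc_self)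
    rwa [Real.volume_real_Ioc_of_le hab.le, ← intervalIntegral.integral_of_le hab.le,
      ← intervalIntegral.integral_of_le hab.le] at h
  calc ∫ t in a..b, |w t - ⨍ x in a..b, w x| ^ p
      ≤ ∫ _ in a..b, K ^ p :=
        intervalIntegral.integral_mono_on hab.le
          (((hw.sub continuous_const).abs.rpow_const fun _ ↦ .inr hp0).intervalIntegrable _ _)
          intervalIntegrable_const fun t ht ↦
            Real.rpow_le_rpow (abs_nonneg _) (abs_sub_intervalAverage_le hab hd hD ht) hp0
    _ = (b - a) * K ^ p := by rw [intervalIntegral.integral_const, smul_eq_mul]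
    _ ≤ (b - a) * ((b - a) ^ (p - 1) * ∫ t in a..b, |D t| ^ p) := by gcongr
    _ = (b - a) ^ p * ∫ t in a..b, |D t| ^ p := by
      rw [← mul_assoc, ← Real.rpow_one_add' hba.le (by linarith), add_sub_cancel]

end IntervalPoincare

lemma setIntegral_prod_le_mul_of_forall {α β : Type*} [MeasurableSpace α] [MeasurableSpace β]
    {μ : Measure α} {ν : Measure β} [SFinite μ] [SFinite ν] {s : Set α} {t : Set β}
    {F G : α × β → ℝ} {c : ℝ}
    (hF : IntegrableOn F (s ×ˢ t) (μ.prod ν)) (hG : IntegrableOn G (s ×ˢ t) (μ.prod ν))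
    (h : ∀ x, ∫ y in t, F (x, y) ∂ν ≤ c * ∫ y in t, G (x, y) ∂ν) :
    ∫ z in s ×ˢ t, F z ∂μ.prod ν ≤ c * ∫ z in s ×ˢ t, G z ∂μ.prod ν := by
  rw [setIntegral_prod F hF, setIntegral_prod G hG, ← integral_const_mul]
  rw [IntegrableOn, ← Measure.prod_restrict] at hF hG
  exact setIntegral_mono hF.integral_prod_left (hG.integral_prod_left.const_mul c) h

theorem setIntegral_prod_Ioo_abs_sub_intervalAverage_rpow_le {E : Type*} [MetricSpace E]
    [ProperSpace E] [MeasurableSpace E] [BorelSpace E] {μ : Measure E}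
    [IsFiniteMeasureOnCompacts μ] {s : Set E} (hs : Bornology.IsBounded s)
    {a b p : ℝ} (hab : a < b) (hp : 1 ≤ p) {f D : E × ℝ → ℝ} (hf : Continuous f)
    (hD : Continuous D) (hd : ∀ x t, HasDerivAt (fun t ↦ f (x, t)) (D (x, t)) t) :
    ∫ q in s ×ˢ Ioo a b, |f q - ⨍ t in a..b, f (q.1, t)| ^ p ∂μ.prod volume ≤
      (b - a) ^ p * ∫ q in s ×ˢ Ioo a b, |D q| ^ p ∂μ.prod volume := by
  have hp0 : 0 ≤ p := by linarith
  have integrableOn {F : E × ℝ → ℝ} (hF : Continuous F) :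
      IntegrableOn F (s ×ˢ Ioo a b) (μ.prod volume) :=
    (hF.continuousOn.integrableOn_compact
      (hs.prod (Metric.isBounded_Ioo a b)).isCompact_closure).mono_set subset_closure
  have hAvg : Continuous fun q : E × ℝ ↦ ⨍ t in a..b, f (q.1, t) := by
    simp only [interval_average_eq]
    fun_prop
  refine setIntegral_prod_le_mul_of_forall
    (integrableOn (((hf.sub hAvg).abs.rpow_const fun _ ↦ .inr hp0)))
    (integrableOn (hD.abs.rpow_const fun _ ↦ .inr hp0)) fun x ↦ ?_
  simp only [← integral_Ioc_eq_integral_Ioo, ← intervalIntegral.integral_of_le hab.le]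
  exact intervalIntegral_abs_sub_intervalAverage_rpow_le hab hp (hd x) (by fun_prop)

namespace EuclideanSpace

variable {n : ℕ}

noncomputable def snocEquiv (n : ℕ) :
    (EuclideanSpace ℝ (Fin n) × ℝ) ≃ᵐ EuclideanSpace ℝ (Fin (n + 1)) :=
  ((MeasurableEquiv.toLp 2 (Fin n → ℝ)).symm.prodCongr (.refl ℝ)).trans <|
    MeasurableEquiv.prodComm.trans <|
      (MeasurableEquiv.piFinSuccAbove (fun _ ↦ ℝ) (Fin.last n)).symm.trans <|
        MeasurableEquiv.toLp 2 (Fin (n + 1) → ℝ)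

@[simp]
lemma snocEquiv_apply (q : EuclideanSpace ℝ (Fin n) × ℝ) :
    snocEquiv n q = WithLp.toLp 2 (Fin.snoc q.1.ofLp q.2) := by
  simp only [snocEquiv, MeasurableEquiv.trans_apply, MeasurableEquiv.piFinSuccAbove_symm_apply,
    Fin.insertNthEquiv_last, MeasurableEquiv.toLp_apply, WithLp.toLp.injEq]
  rfl

@[simp]
lemma toLp_castSucc_snocEquiv (q : EuclideanSpace ℝ (Fin n) × ℝ) :
    WithLp.toLp 2 (fun i : Fin n ↦ snocEquiv n q i.castSucc) = q.1 := by
  ext i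
  simp

lemma measurePreserving_snocEquiv : MeasurePreserving (snocEquiv n) :=
  (EuclideanSpace.volume_preserving_symm_measurableEquiv_toLp (Fin (n + 1))).symm _ |>.comp <|
    (volume_preserving_piFinSuccAbove (fun _ ↦ ℝ) (Fin.last n)).symm _ |>.comp <|
      Measure.measurePreserving_swap.comp <|
        (EuclideanSpace.volume_preserving_symm_measurableEquiv_toLp (Fin n)).prod
          (.id volume)

lemma continuous_snocEquiv : Continuous (snocEquiv n) := by
  simp only [funext snocEquiv_apply]
  fun_prop

lemma hasDerivAt_snocEquiv_right (xb : EuclideanSpace ℝ (Fin n)) (t : ℝ) :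
    HasDerivAt (fun t ↦ snocEquiv n (xb, t)) (single (Fin.last n) 1) t := by
  have line := ((hasDerivAt_id t).smul_const (single (Fin.last n) (1 : ℝ))).const_add
    (snocEquiv n (xb, 0))
  rw [one_smul] at line
  refine line.congr_of_eventuallyEq (.of_forall fun s ↦ ?_)
  ext i
  induction i using Fin.lastCases <;> simp [Fin.snoc_castSucc, Fin.snoc_last]

lemma snocEquiv_image_prod_Ioo (Ω : Set (EuclideanSpace ℝ (Fin n))) (ε : ℝ) :
    snocEquiv n '' (Ω ×ˢ Ioo (-ε) ε) = thinDomain n Ω ε := by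
  ext x
  obtain ⟨q, rfl⟩ := (snocEquiv n).surjective x
  rw [(snocEquiv n).injective.mem_set_image]
  simp [thinDomain, abs_lt]

end EuclideanSpace

open EuclideanSpace

lemma setIntegral_thinDomain {n : ℕ} (Ω : Set (EuclideanSpace ℝ (Fin n))) (ε : ℝ)
    (f : EuclideanSpace ℝ (Fin (n + 1)) → ℝ) :
    ∫ x in thinDomain n Ω ε, f x = ∫ q in Ω ×ˢ Ioo (-ε) ε, f (snocEquiv n q) := by
  rw [← snocEquiv_image_prod_Ioo,
    measurePreserving_snocEquiv.setIntegral_image_emb (snocEquiv n).measurableEmbedding]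

lemma thinAverage_eq_intervalAverage {n : ℕ} (ε : ℝ) (u : EuclideanSpace ℝ (Fin (n + 1)) → ℝ)
    (xb : EuclideanSpace ℝ (Fin n)) :
    thinAverage n ε u xb = ⨍ t in -ε..ε, u (snocEquiv n (xb, t)) := by
  rw [interval_average_eq, thinAverage, sub_neg_eq_add, ← two_mul, one_div, smul_eq_mul]
  simp

theorem thin_domain_poincare_wirtinger_general (n : ℕ) (p : ℝ) (hp : 1 ≤ p)
    (Ω : Set (EuclideanSpace ℝ (Fin n)))
    (hΩbdd : Bornology.IsBounded Ω) :
    ∃ C > (0 : ℝ), ∀ ε ∈ Set.Ioc (0 : ℝ) 1,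
      ∀ u : EuclideanSpace ℝ (Fin (n + 1)) → ℝ, ContDiff ℝ 1 u →
        (∃ B : ℝ, ∀ x ∈ thinDomain n Ω ε, |u x| ≤ B ∧ ‖fderiv ℝ u x‖ ≤ B) →
        ∫ x in thinDomain n Ω ε,
            |u x - thinAverage n ε u (WithLp.toLp 2 (fun i : Fin n => x i.castSucc))| ^ p ≤
          C ^ p * ε ^ p * ∫ x in thinDomain n Ω ε,
            |fderiv ℝ u x (EuclideanSpace.single (Fin.last n) (1 : ℝ))| ^ p := by
  refine ⟨2, two_pos, fun ε hε u hu _ ↦ ?_⟩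
  rw [setIntegral_thinDomain, setIntegral_thinDomain, ← Real.mul_rpow two_pos.le hε.1.le,
    two_mul, ← sub_neg_eq_add]
  simp only [toLp_castSucc_snocEquiv, thinAverage_eq_intervalAverage]
  exact setIntegral_prod_Ioo_abs_sub_intervalAverage_rpow_le hΩbdd (by linarith [hε.1]) hp
    (hu.continuous.comp continuous_snocEquiv)
    (((hu.continuous_fderiv one_ne_zero).clm_apply continuous_const).comp continuous_snocEquiv)
    fun xb t ↦ ((hu.differentiable one_ne_zero) _).hasFDerivAt.comp_hasDerivAt t
      (hasDerivAt_snocEquiv_right xb t)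

/-- The Poincaré–Wirtinger inequality (*1) in a thin domain, with constant of order ε. -/
theorem thin_domain_poincare_wirtinger (n : ℕ) (hn : 1 ≤ n) (p : ℝ) (hp : 1 ≤ p)
    (Ω : Set (EuclideanSpace ℝ (Fin n))) (hΩopen : IsOpen Ω)
    (hΩbdd : Bornology.IsBounded Ω) :
    ∃ C > (0 : ℝ), ∀ ε ∈ Set.Ioc (0 : ℝ) 1,
      ∀ u : EuclideanSpace ℝ (Fin (n + 1)) → ℝ, ContDiff ℝ 1 u →
        (∃ B : ℝ, ∀ x ∈ thinDomain n Ω ε, |u x| ≤ B ∧ ‖fderiv ℝ u x‖ ≤ B) →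
        ∫ x in thinDomain n Ω ε,
            |u x - thinAverage n ε u (WithLp.toLp 2 (fun i : Fin n => x i.castSucc))| ^ p ≤
          C ^ p * ε ^ p * ∫ x in thinDomain n Ω ε,
            |fderiv ℝ u x (EuclideanSpace.single (Fin.last n) (1 : ℝ))| ^ p :=
  thin_domain_poincare_wirtinger_general n p hp Ω hΩbdd
end
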